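/- arXiv:1409.6687 — 2 statements merged into one kernel-verified Lean document; each statement's English description precedes it below -/
import Mathlib

section
/- Let G = {m₁, …, m_q, n} be a semidominant set of monomials (each m_i dominant, n nondominant). Define A = {(σ ∪ {n}, σ) : σ ⊆ {m₁,…,m_q}, n divides lcm(σ)}. Then: (a) distinct pairs in A are disjoint (share no component); (b) for each (σ ∪ {n}, σ) ∈ A, lcm(σ ∪ {n}) = lcm(σ); and (c) every pair (σ, τ) of subsets of G with τ = σ \ {g} for some g ∈ σ and lcm(σ) = lcm(τ) belongs to A. -/
open Finset

variable {X : Type*} [DecidableEq X]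

/-- The lcm of a finite set of monomials (monomials = finitely supported
exponent functions): pointwise maximum of exponents. -/
noncomputable def mlcm (L : Finset (X →₀ ℕ)) : X →₀ ℕ := L.sup id

/-- `m` is dominant with respect to `G`: some variable `x` appears in `m`
with exponent at least `k > 0` while every other element of `G` has
`x`-exponent `< k`. -/
def Dominant (G : Finset (X →₀ ℕ)) (m : X →₀ ℕ) : Prop :=
  ∃ x : X, ∃ k : ℕ, 0 < k ∧ k ≤ m x ∧ ∀ m' ∈ G, m' ≠ m → m' x < k

/-- Total degree of a monomial: sum of its exponents. -/
def mdeg (m : X →₀ ℕ) : ℕ := m.sum fun _ e => e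

/-! If `g ∈ σ` is dominant, witnessed by the variable `x`, then `g` is the only element of `σ`
reaching the `x`-exponent of `lcm σ`, so deleting `g` lowers the lcm. Hence the only deletion
that preserves the lcm is the deletion of the nondominant `n`, and it does so exactly when `n`
divides the lcm of the remaining monomials. Parts (a) and (b) are bookkeeping about `insert n`. -/

theorem Finset.insert_inj_of_notMem {α : Type*} [DecidableEq α] {a : α} {s t : Finset α}
    (hs : a ∉ s) (ht : a ∉ t) : insert a s = insert a t ↔ s = t :=
  ⟨fun h => by simpa only [erase_insert hs, erase_insert ht] using congrArg (·.erase a) h,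
    congrArg _⟩

lemma mlcm_apply (L : Finset (X →₀ ℕ)) (x : X) : mlcm L x = L.sup fun m => m x := by
  induction L using Finset.induction with
  | empty => rfl
  | insert m L _ ih => simp only [mlcm, sup_insert, id, Finsupp.sup_apply, ← ih]

lemma mlcm_insert_of_le {L : Finset (X →₀ ℕ)} {n : X →₀ ℕ} (h : n ≤ mlcm L) :
    mlcm (insert n L) = mlcm L := by
  simpa only [mlcm, sup_insert, id] using sup_eq_right.mpr h

variable {G σ : Finset (X →₀ ℕ)} {g : X →₀ ℕ}

lemma Dominant.mlcm_erase_ne (hg : Dominant G g) (hσ : σ ⊆ G) (hgσ : g ∈ σ) :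
    mlcm (σ.erase g) ≠ mlcm σ := by
  obtain ⟨x, k, hk, hkg, hlt⟩ := hg
  have h_erase : mlcm (σ.erase g) x < k := by
    rw [mlcm_apply, Finset.sup_lt_iff hk]
    intro m hm
    exact hlt m (hσ (mem_of_mem_erase hm)) (ne_of_mem_erase hm)
  have h_full : k ≤ mlcm σ x := hkg.trans (le_sup (f := id) hgσ x)
  intro h
  rw [h] at h_erase
  omega

lemma eq_of_mlcm_erase_eq {n : X →₀ ℕ} (hdom : ∀ m ∈ G, m ≠ n → Dominant G m)
    (hσ : σ ⊆ G) (hgσ : g ∈ σ) (h : mlcm σ = mlcm (σ.erase g)) : g = n := by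
  by_contra hgn
  exact (hdom g (hσ hgσ) hgn).mlcm_erase_ne hσ hgσ h.symm

theorem semidominant_pairs_A_general (G : Finset (X →₀ ℕ)) (n : X →₀ ℕ)
    (hdom : ∀ m ∈ G, m ≠ n → Dominant G m) :
    (∀ σ ⊆ G.erase n, ∀ σ' ⊆ G.erase n, n ≤ mlcm σ → n ≤ mlcm σ' → σ ≠ σ' →
        insert n σ ≠ insert n σ' ∧ insert n σ ≠ σ' ∧ σ ≠ insert n σ') ∧
    (∀ σ ⊆ G.erase n, n ≤ mlcm σ → mlcm (insert n σ) = mlcm σ) ∧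
    (∀ σ ⊆ G, ∀ g ∈ σ, mlcm σ = mlcm (σ.erase g) →
        ∃ σ₀ ⊆ G.erase n, n ≤ mlcm σ₀ ∧ σ = insert n σ₀ ∧ σ.erase g = σ₀) := by
  refine ⟨fun σ hσ σ' hσ' _ _ hne => ?_, fun σ _ h => mlcm_insert_of_le h, ?_⟩
  · have hnσ : n ∉ σ := fun h => notMem_erase n G (hσ h)
    have hnσ' : n ∉ σ' := fun h => notMem_erase n G (hσ' h)
    exact ⟨(insert_inj_of_notMem hnσ hnσ').not.mpr hne,
      ne_of_mem_of_not_mem' (mem_insert_self n σ) hnσ',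
      (ne_of_mem_of_not_mem' (mem_insert_self n σ') hnσ).symm⟩
  · intro σ hσ g hg h
    obtain rfl : g = n := eq_of_mlcm_erase_eq hdom hσ hg h
    exact ⟨σ.erase g, erase_subset_erase g hσ, h ▸ le_sup (f := id) hg,
      (insert_erase hg).symm, rfl⟩

theorem semidominant_pairs_A (G : Finset (X →₀ ℕ)) (n : X →₀ ℕ) (hn : n ∈ G)
    (hnd : ¬ Dominant G n) (hdom : ∀ m ∈ G, m ≠ n → Dominant G m) :
    (∀ σ ⊆ G.erase n, ∀ σ' ⊆ G.erase n, n ≤ mlcm σ → n ≤ mlcm σ' → σ ≠ σ' →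
        insert n σ ≠ insert n σ' ∧ insert n σ ≠ σ' ∧ σ ≠ insert n σ') ∧
    (∀ σ ⊆ G.erase n, n ≤ mlcm σ → mlcm (insert n σ) = mlcm σ) ∧
    (∀ σ ⊆ G, ∀ g ∈ σ, mlcm σ = mlcm (σ.erase g) →
        ∃ σ₀ ⊆ G.erase n, n ≤ mlcm σ₀ ∧ σ = insert n σ₀ ∧ σ.erase g = σ₀) :=
  semidominant_pairs_A_general G n hdom
end

section
/- Let G = {m₁, …, m_q, n} be a semidominant set of monomials. Then the largest dominant subset of G containing n has cardinality 2 if and only if for all i ≠ j, n divides lcm(m_i, m_j). -/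
open Finset

variable {X : Type*} [DecidableEq X]

/-! `m` is dominant in `G` exactly when `m` does not divide the lcm of the other elements of `G`.
Since the `mᵢ` stay dominant in every subset, a dominant `D ∋ n` with three elements exists iff
`n ∤ lcm(mᵢ, mⱼ)` for some `i ≠ j`, and a larger one would contain such a triple because
`lcm(mᵢ, mⱼ) ∣ lcm(D ∖ {n})`. The pair `{m₁, n}` is dominant as neither element divides the other. -/

section

omit [DecidableEq X]

theorem mlcm_apply_s11 (S : Finset (X →₀ ℕ)) (x : X) : mlcm S x = S.sup (· x) :=
  Finset.apply_sup_eq_sup_comp (fun f : X →₀ ℕ => f x) (fun f g => Finsupp.sup_apply f g x) rfl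

theorem mlcm_mono {S T : Finset (X →₀ ℕ)} (h : S ⊆ T) : mlcm S ≤ mlcm T :=
  Finset.sup_mono h

theorem mlcm_singleton (a : X →₀ ℕ) : mlcm {a} = a :=
  Finset.sup_singleton

theorem Dominant.mono {D G : Finset (X →₀ ℕ)} {m : X →₀ ℕ} (h : Dominant G m) (hDG : D ⊆ G) :
    Dominant D m := by
  obtain ⟨x, k, hk, hkm, hlt⟩ := h
  exact ⟨x, k, hk, hkm, fun m' hm' => hlt m' (hDG hm')⟩

end

theorem dominant_iff_not_le_mlcm_erase {G : Finset (X →₀ ℕ)} {m : X →₀ ℕ} :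
    Dominant G m ↔ ¬ m ≤ mlcm (G.erase m) := by
  simp only [Finsupp.le_def, not_forall, not_le, mlcm_apply_s11]
  constructor
  · rintro ⟨x, k, hk, hkm, hlt⟩
    refine ⟨x, lt_of_lt_of_le ((Finset.sup_lt_iff hk).2 fun m' hm' => ?_) hkm⟩
    exact hlt m' (mem_of_mem_erase hm') (ne_of_mem_erase hm')
  · rintro ⟨x, hx⟩
    have hpos : 0 < m x := lt_of_le_of_lt (Nat.zero_le _) hx
    refine ⟨x, m x, hpos, le_rfl, fun m' hm' hne => ?_⟩
    exact (Finset.sup_lt_iff hpos).1 hx m' (mem_erase.2 ⟨hne, hm'⟩)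

theorem dominant_insert_iff {S : Finset (X →₀ ℕ)} {m : X →₀ ℕ} (hm : m ∉ S) :
    Dominant (insert m S) m ↔ ¬ m ≤ mlcm S := by
  rw [dominant_iff_not_le_mlcm_erase, erase_insert hm]

theorem dominant_pair_iff {a b : X →₀ ℕ} (hab : a ≠ b) : Dominant {a, b} a ↔ ¬ a ≤ b := by
  rw [dominant_insert_iff (by simpa using hab), mlcm_singleton]

theorem card_le_two_of_forall_le_mlcm_pair {D : Finset (X →₀ ℕ)} {n : X →₀ ℕ} (hn : n ∈ D)
    (hdom : Dominant D n) (h : ∀ a ∈ D.erase n, ∀ b ∈ D.erase n, a ≠ b → n ≤ mlcm {a, b}) :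
    D.card ≤ 2 := by
  by_contra! hcard
  obtain ⟨a, ha, b, hb, hab⟩ := one_lt_card.1 (by rw [card_erase_of_mem hn]; omega)
  refine dominant_iff_not_le_mlcm_erase.1 hdom ((h a ha b hb hab).trans (mlcm_mono ?_))
  simp [insert_subset_iff, ha, hb]

theorem exists_dominant_pair {G : Finset (X →₀ ℕ)} {n : X →₀ ℕ} (hn : n ∈ G)
    (hmin : ∀ a ∈ G, ∀ b ∈ G, a ≠ b → ¬ a ≤ b) (hq : (G.erase n).Nonempty) :
    ∃ D ⊆ G, n ∈ D ∧ (∀ m ∈ D, Dominant D m) ∧ D.card = 2 := by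
  obtain ⟨a, ha⟩ := hq
  obtain ⟨han, haG⟩ := mem_erase.1 ha
  refine ⟨{a, n}, by simp [insert_subset_iff, haG, hn], by simp, ?_, card_pair han⟩
  simp only [mem_insert, mem_singleton, forall_eq_or_imp, forall_eq]
  refine ⟨(dominant_pair_iff han).2 (hmin a haG n hn han), ?_⟩
  rw [pair_comm]
  exact (dominant_pair_iff han.symm).2 (hmin n hn a haG han.symm)

theorem le_mlcm_pair_of_forall_card_le_two {G : Finset (X →₀ ℕ)} {n a b : X →₀ ℕ} (hn : n ∈ G)
    (hdom : ∀ m ∈ G, m ≠ n → Dominant G m)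
    (hbound : ∀ D ⊆ G, n ∈ D → (∀ m ∈ D, Dominant D m) → D.card ≤ 2)
    (ha : a ∈ G.erase n) (hb : b ∈ G.erase n) (hab : a ≠ b) : n ≤ mlcm {a, b} := by
  obtain ⟨han, haG⟩ := mem_erase.1 ha
  obtain ⟨hbn, hbG⟩ := mem_erase.1 hb
  by_contra hnot
  have hsub : {n, a, b} ⊆ G := by simp [insert_subset_iff, hn, haG, hbG]
  have hnD : Dominant {n, a, b} n :=
    (dominant_insert_iff (by simp [han.symm, hbn.symm])).2 hnot
  have hD : ∀ m ∈ ({n, a, b} : Finset (X →₀ ℕ)), Dominant {n, a, b} m := by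
    simp only [mem_insert, mem_singleton, forall_eq_or_imp, forall_eq]
    exact ⟨hnD, (hdom a haG han).mono hsub, (hdom b hbG hbn).mono hsub⟩
  have hcard : ({n, a, b} : Finset (X →₀ ℕ)).card = 3 :=
    card_eq_three.2 ⟨n, a, b, han.symm, hbn.symm, hab, rfl⟩
  have := hbound _ hsub (by simp) hD
  omega

theorem pd_two_iff_general (G : Finset (X →₀ ℕ)) (n : X →₀ ℕ) (hn : n ∈ G)
    (hdom : ∀ m ∈ G, m ≠ n → Dominant G m)
    (hmin : ∀ a ∈ G, ∀ b ∈ G, a ≠ b → ¬ a ≤ b)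
    (hq : (G.erase n).Nonempty) :
    ((∀ D ⊆ G, n ∈ D → (∀ m ∈ D, Dominant D m) → D.card ≤ 2) ∧
     (∃ D ⊆ G, n ∈ D ∧ (∀ m ∈ D, Dominant D m) ∧ D.card = 2)) ↔
    (∀ a ∈ G.erase n, ∀ b ∈ G.erase n, a ≠ b → n ≤ mlcm {a, b}) := by
  refine ⟨fun ⟨hbound, _⟩ a ha b hb hab =>
    le_mlcm_pair_of_forall_card_le_two hn hdom hbound ha hb hab, fun h => ⟨?_, ?_⟩⟩
  · intro D hDG hnD hD
    refine card_le_two_of_forall_le_mlcm_pair hnD (hD n hnD) fun a ha b hb hab => ?_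
    exact h a (erase_subset_erase n hDG ha) b (erase_subset_erase n hDG hb) hab
  · exact exists_dominant_pair hn hmin hq

theorem pd_two_iff (G : Finset (X →₀ ℕ)) (n : X →₀ ℕ) (hn : n ∈ G)
    (hnd : ¬ Dominant G n) (hdom : ∀ m ∈ G, m ≠ n → Dominant G m)
    (hmin : ∀ a ∈ G, ∀ b ∈ G, a ≠ b → ¬ a ≤ b)
    (hq : (G.erase n).Nonempty) :
    ((∀ D ⊆ G, n ∈ D → (∀ m ∈ D, Dominant D m) → D.card ≤ 2) ∧
     (∃ D ⊆ G, n ∈ D ∧ (∀ m ∈ D, Dominant D m) ∧ D.card = 2)) ↔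
    (∀ a ∈ G.erase n, ∀ b ∈ G.erase n, a ≠ b → n ≤ mlcm {a, b}) :=
  pd_two_iff_general G n hn hdom hmin hq
end
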